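/- arXiv:2601.00176 — 4 statements merged into one kernel-verified Lean document; each statement's English description precedes it below -/
import Mathlib

section
/- Let A be a d×d Metzler matrix that is Hurwitz stable. Then there exists a vector v ∈ ℝ^d with all entries strictly positive such that all entries of Av are strictly negative. -/
/-- A real square matrix is Metzler if all off-diagonal entries are nonnegative. -/
def Matrix.IsMetzler {d : ℕ} (A : Matrix (Fin d) (Fin d) ℝ) : Prop :=
  ∀ i j, i ≠ j → 0 ≤ A i j

/-- A real square matrix is Hurwitz stable if every (complex) eigenvalue has
negative real part. -/
def Matrix.IsHurwitz {d : ℕ} (A : Matrix (Fin d) (Fin d) ℝ) : Prop :=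
  ∀ μ : ℂ, (A.map (algebraMap ℝ ℂ)).charpoly.IsRoot μ → μ.re < 0

/-!
For small `t > 0` the matrix `B = 1 + t • A` is entrywise nonnegative (Metzler) and its
eigenvalues `1 + t μ` lie in the open unit disc (Hurwitz), so `B ^ k → 0` by Gelfand's formula.
Hence `(1 - B)⁻¹ = ∑ B ^ k` is entrywise nonnegative; being invertible it has no zero row, so
`v = (1 - B)⁻¹ *ᵥ 1` is positive, and `A *ᵥ v = -t⁻¹ • 1` because `1 - B = -t • A`.
-/

open Filter Matrix Topology
open scoped ENNReal

section BanachAlgebra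

variable {A : Type*} [NormedRing A] [NormedAlgebra ℂ A] [CompleteSpace A]

theorem tendsto_pow_atTop_nhds_zero_of_spectralRadius_lt_one {a : A}
    (h : spectralRadius ℂ a < 1) : Tendsto (a ^ ·) atTop (𝓝 0) := by
  obtain ⟨r, hρr, hr1⟩ := ENNReal.lt_iff_exists_nnreal_btwn.1 h
  have hr1 : (r : ℝ) < 1 := by exact_mod_cast hr1
  have hbound : ∀ᶠ n : ℕ in atTop, ‖a ^ n‖ ≤ (r : ℝ) ^ n := by
    filter_upwards [(spectrum.pow_nnnorm_pow_one_div_tendsto_nhds_spectralRadius a).eventually_lt_const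
      hρr, eventually_gt_atTop 0] with n hn hn0
    have : (‖a ^ n‖₊ : ℝ≥0∞) < (r : ℝ≥0∞) ^ n := by
      simpa [← ENNReal.rpow_natCast, ← ENNReal.rpow_mul, hn0.ne'] using
        ENNReal.rpow_lt_rpow hn (Nat.cast_pos.2 hn0)
    exact_mod_cast this.le
  exact squeeze_zero_norm' hbound (tendsto_pow_atTop_nhds_zero_of_lt_one r.2 hr1)

theorem tendsto_pow_atTop_nhds_zero_of_forall_norm_lt_one {a : A}
    (h : ∀ z ∈ spectrum ℂ a, ‖z‖ < 1) : Tendsto (a ^ ·) atTop (𝓝 0) := by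
  rcases subsingleton_or_nontrivial A with hA | hA
  · simpa only [Subsingleton.elim _ (0 : A)] using tendsto_const_nhds
  · refine tendsto_pow_atTop_nhds_zero_of_spectralRadius_lt_one ?_
    exact_mod_cast spectrum.spectralRadius_lt_of_forall_lt a fun z hz => by exact_mod_cast h z hz

end BanachAlgebra

theorem Complex.eventually_norm_one_add_mul_lt_one {μ : ℂ} (hμ : μ.re < 0) :
    ∀ᶠ t : ℝ in 𝓝[>] 0, ‖1 + t * μ‖ < 1 := by
  have hnorm : 0 < ‖μ‖ ^ 2 := by
    have : μ ≠ 0 := fun h => by simp [h] at hμ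
    positivity
  filter_upwards [Ioo_mem_nhdsGT (div_pos (by linarith : 0 < -2 * μ.re) hnorm)] with t ht
  obtain ⟨ht0, htμ⟩ := ht
  rw [lt_div_iff₀ hnorm] at htμ
  have hsq : ‖1 + t * μ‖ ^ 2 = 1 + 2 * t * μ.re + t ^ 2 * ‖μ‖ ^ 2 := by
    rw [← Complex.normSq_eq_norm_sq, ← Complex.normSq_eq_norm_sq, Complex.normSq_apply,
      Complex.normSq_apply]
    simp only [Complex.add_re, Complex.one_re, Complex.mul_re, Complex.ofReal_re,
      Complex.ofReal_im, zero_mul, sub_zero, Complex.add_im, Complex.one_im, Complex.mul_im,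
      add_zero, zero_add]
    ring
  refine (pow_lt_one_iff_of_nonneg (norm_nonneg _) two_ne_zero).1 ?_
  rw [hsq]
  nlinarith

namespace Matrix

variable {n : Type*} [Fintype n] [DecidableEq n]

section

attribute [local instance] Matrix.linftyOpNormedRing Matrix.linftyOpNormedAlgebra

theorem tendsto_pow_atTop_nhds_zero_of_spectrum_complexification {B : Matrix n n ℝ}
    (h : ∀ z ∈ spectrum ℂ (B.map (algebraMap ℝ ℂ)), ‖z‖ < 1) :
    Tendsto (B ^ ·) atTop (𝓝 0) := by
  have hre : Continuous fun M : Matrix n n ℂ => M.map Complex.re :=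
    Continuous.matrix_map continuous_id Complex.continuous_re
  have hpow : ∀ k, ((B.map (algebraMap ℝ ℂ)) ^ k).map Complex.re = B ^ k := fun k => by
    rw [← RingHom.mapMatrix_apply, ← map_pow, RingHom.mapMatrix_apply, map_map]
    ext
    simp
  have := (hre.tendsto 0).comp (tendsto_pow_atTop_nhds_zero_of_forall_norm_lt_one h)
  rwa [Function.comp_def, funext hpow, Matrix.map_zero _ Complex.zero_re] at this

end

theorem isUnit_one_sub_of_tendsto_pow {K : Type*} [Field K] [TopologicalSpace K]
    [IsTopologicalRing K] [T2Space K] {B : Matrix n n K} (hB : Tendsto (B ^ ·) atTop (𝓝 0)) :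
    IsUnit (1 - B) := by
  rw [isUnit_iff_isUnit_det, isUnit_iff_ne_zero]
  intro hdet
  have hlim : Tendsto (fun m => (1 - B ^ m).det) atTop (𝓝 (1 - 0 : Matrix n n K).det) :=
    (continuous_id.matrix_det.tendsto _).comp (tendsto_const_nhds.sub hB)
  have hzero : ∀ m, (1 - B ^ m).det = 0 := fun m => by
    rw [← mul_neg_geom_sum, det_mul, hdet, zero_mul]
  simp only [hzero, sub_zero, det_one] at hlim
  exact zero_ne_one (tendsto_nhds_unique tendsto_const_nhds hlim)

theorem inv_one_sub_apply_nonneg_of_tendsto_pow {K : Type*} [Field K] [LinearOrder K]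
    [IsStrictOrderedRing K] [TopologicalSpace K] [OrderTopology K] [IsTopologicalRing K]
    {B : Matrix n n K} (hB0 : ∀ i j, 0 ≤ B i j)
    (hB : Tendsto (B ^ ·) atTop (𝓝 0)) (i j : n) : 0 ≤ (1 - B)⁻¹ i j := by
  have hunit := (isUnit_iff_isUnit_det _).1 (isUnit_one_sub_of_tendsto_pow hB)
  have hsum : ∀ m, ∑ k ∈ Finset.range m, B ^ k = (1 - B)⁻¹ - (1 - B)⁻¹ * B ^ m := fun m => by
    simpa [← mul_assoc, nonsing_inv_mul _ hunit, mul_sub] using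
      congrArg ((1 - B)⁻¹ * ·) (mul_neg_geom_sum B m)
  have hlim : Tendsto (fun m => ∑ k ∈ Finset.range m, B ^ k) atTop (𝓝 (1 - B)⁻¹) := by
    simpa [hsum] using tendsto_const_nhds.sub (tendsto_const_nhds.mul hB)
  refine ge_of_tendsto ((continuous_apply_apply i j).tendsto _ |>.comp hlim) (.of_forall fun m => ?_)
  show 0 ≤ (∑ k ∈ Finset.range m, B ^ k) i j
  rw [sum_apply]
  exact Finset.sum_nonneg fun k _ => pow_apply_nonneg hB0 k i j

theorem mulVec_one_pos_of_nonneg {R : Type*} [CommRing R] [PartialOrder R] [IsOrderedRing R]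
    {C : Matrix n n R} (hC : ∀ i j, 0 ≤ C i j) (hdet : C.det ≠ 0)
    (i : n) : 0 < (C *ᵥ 1) i := by
  have hsum : (C *ᵥ 1) i = ∑ j, C i j := by simp [mulVec, dotProduct]
  rw [hsum]
  refine (Finset.sum_nonneg fun j _ => hC i j).lt_of_ne fun h => hdet ?_
  exact det_eq_zero_of_row_eq_zero i fun j =>
    (Finset.sum_eq_zero_iff_of_nonneg fun j _ => hC i j).1 h.symm j (Finset.mem_univ j)

theorem IsMetzler.eventually_one_add_smul_nonneg {d : ℕ} {A : Matrix (Fin d) (Fin d) ℝ}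
    (hA : A.IsMetzler) : ∀ᶠ t : ℝ in 𝓝[>] 0, ∀ i j, 0 ≤ (1 + t • A) i j := by
  simp only [eventually_all]
  intro i j
  rcases eq_or_ne i j with rfl | hij
  · have hcont : ContinuousAt (fun t : ℝ => 1 + t * A i i) 0 := by fun_prop
    have hpos := hcont.eventually (lt_mem_nhds (by simp : (0 : ℝ) < 1 + 0 * A i i))
    filter_upwards [nhdsWithin_le_nhds hpos] with t ht
    simpa using ht.le
  · filter_upwards [self_mem_nhdsWithin] with t (ht : 0 < t)
    simpa [hij] using mul_nonneg ht.le (hA i j hij)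

theorem IsHurwitz.eventually_norm_lt_one_of_mem_spectrum {d : ℕ}
    {A : Matrix (Fin d) (Fin d) ℝ} (hA : A.IsHurwitz) :
    ∀ᶠ t : ℝ in 𝓝[>] 0,
      ∀ z ∈ spectrum ℂ ((1 + t • A).map (algebraMap ℝ ℂ)), ‖z‖ < 1 := by
  set Ac := A.map (algebraMap ℝ ℂ)
  have hroots : ∀ᶠ t : ℝ in 𝓝[>] 0, ∀ μ ∈ Ac.charpoly.roots.toFinset, ‖1 + t * μ‖ < 1 :=
    (Finset.eventually_all _).2 fun μ hμ => Complex.eventually_norm_one_add_mul_lt_one <|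
      hA μ (Polynomial.isRoot_of_mem_roots (Multiset.mem_toFinset.1 hμ))
  filter_upwards [hroots, self_mem_nhdsWithin] with t ht (ht0 : 0 < t) z hz
  have hmap : (1 + t • A).map (algebraMap ℝ ℂ) =
      algebraMap ℂ _ 1 + (Units.mk0 (t : ℂ) (by simpa using ht0.ne')) • Ac := by
    rw [map_one, Units.smul_mk0, Matrix.map_add, Matrix.map_one, Matrix.map_smul] <;> simp [Ac]
  rw [hmap, ← spectrum.singleton_add_eq, spectrum.unit_smul_eq_smul] at hz
  obtain ⟨_, rfl, _, ⟨μ, hμ, rfl⟩, rfl⟩ := hz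
  have hroot : μ ∈ Ac.charpoly.roots.toFinset := by
    rw [Multiset.mem_toFinset, Polynomial.mem_roots Ac.charpoly_monic.ne_zero]
    exact mem_spectrum_iff_isRoot_charpoly.1 hμ
  simpa using ht μ hroot

end Matrix

/-- For a Metzler Hurwitz matrix there is a strictly positive vector `v` with
`A v` strictly negative componentwise. -/
theorem metzler_hurwitz_exists_positive_decreasing_direction {d : ℕ}
    (A : Matrix (Fin d) (Fin d) ℝ) (hM : A.IsMetzler) (hH : A.IsHurwitz) :
    ∃ v : Fin d → ℝ, (∀ i, 0 < v i) ∧ ∀ i, A.mulVec v i < 0 := by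
  obtain ⟨t, ht : 0 < t, hB0, hσ⟩ := (eventually_mem_nhdsWithin.and
    (hM.eventually_one_add_smul_nonneg.and hH.eventually_norm_lt_one_of_mem_spectrum)).exists
  set B := 1 + t • A
  have hpow := tendsto_pow_atTop_nhds_zero_of_spectrum_complexification hσ
  have hunit : IsUnit (1 - B).det :=
    (isUnit_iff_isUnit_det _).1 (isUnit_one_sub_of_tendsto_pow hpow)
  refine ⟨(1 - B)⁻¹ *ᵥ 1, mulVec_one_pos_of_nonneg
    (inv_one_sub_apply_nonneg_of_tendsto_pow hB0 hpow) (isUnit_nonsing_inv_det _ hunit).ne_zero,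
    fun i => ?_⟩
  have hA : A = -t⁻¹ • (1 - B) := by simp [B, smul_smul, ht.ne']
  rw [mulVec_mulVec, hA, smul_mul, mul_nonsing_inv _ hunit]
  simp [neg_mulVec, smul_mulVec, ht]
end

section
/- Let κ₀,…,κ₇ > 0 and c > max{κ₃/κ₆, κ₄/κ₇}. For x ∈ ℕ₀⁴ define D(x) = 2cκ₅ + κ₀ − (cκ₆ − κ₃)x₃ − (cκ₇ − κ₄)x₄ − x₁(κ₁ + κ₃₁ x₃ + κ₄₁ x₄) − x₂(κ₂ + κ₃₂ x₃ + κ₄₂ x₄), where κ₃₁, κ₄₁, κ₃₂, κ₄₂ ≥ 0. Then with v = (2, 1, 2c, c) and C = min{κ₁/2, κ₂, κ₆/2 − κ₃/(2c), κ₇ − κ₄/c} > 0, one has D(x) ≤ 2cκ₅ + κ₀ − C (v · x) for all x ∈ ℕ₀⁴; in particular D(x) ≤ −(C/2)(v·x) for all but finitely many x ∈ ℕ₀⁴. -/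
set_option maxHeartbeats 1000000


/-- Drift bound for Example 5.6: with `c > max{κ₃/κ₆, κ₄/κ₇}`, `v = (2,1,2c,c)` and
`C = min{κ₁/2, κ₂, κ₆/2 − κ₃/(2c), κ₇ − κ₄/c}`, one has `C > 0`,
`D(x) ≤ 2cκ₅ + κ₀ − C (v·x)` for all `x ∈ ℕ₀⁴`, and
`D(x) ≤ −(C/2)(v·x)` for all but finitely many `x ∈ ℕ₀⁴`. -/
theorem open_network_drift_bound (κ₀ κ₁ κ₂ κ₃ κ₄ κ₅ κ₆ κ₇ : ℝ)
    (κ₃₁ κ₄₁ κ₃₂ κ₄₂ : ℝ)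
    (h₀ : 0 < κ₀) (h₁ : 0 < κ₁) (h₂ : 0 < κ₂) (h₃ : 0 < κ₃) (h₄ : 0 < κ₄)
    (h₅ : 0 < κ₅) (h₆ : 0 < κ₆) (h₇ : 0 < κ₇)
    (h₃₁ : 0 ≤ κ₃₁) (h₄₁ : 0 ≤ κ₄₁) (h₃₂ : 0 ≤ κ₃₂) (h₄₂ : 0 ≤ κ₄₂)
    (c : ℝ) (hc : max (κ₃ / κ₆) (κ₄ / κ₇) < c) :
    let D : (Fin 4 → ℕ) → ℝ := fun x =>
      2 * c * κ₅ + κ₀ - (c * κ₆ - κ₃) * (x 2 : ℝ) - (c * κ₇ - κ₄) * (x 3 : ℝ)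
        - (x 0 : ℝ) * (κ₁ + κ₃₁ * (x 2 : ℝ) + κ₄₁ * (x 3 : ℝ))
        - (x 1 : ℝ) * (κ₂ + κ₃₂ * (x 2 : ℝ) + κ₄₂ * (x 3 : ℝ))
    let vdot : (Fin 4 → ℕ) → ℝ := fun x =>
      2 * (x 0 : ℝ) + (x 1 : ℝ) + 2 * c * (x 2 : ℝ) + c * (x 3 : ℝ)
    let C : ℝ := min (min (κ₁ / 2) κ₂) (min (κ₆ / 2 - κ₃ / (2 * c)) (κ₇ - κ₄ / c))
    0 < C ∧ (∀ x : Fin 4 → ℕ, D x ≤ 2 * c * κ₅ + κ₀ - C * vdot x) ∧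
      {x : Fin 4 → ℕ | ¬ D x ≤ -(C / 2) * vdot x}.Finite := by
  intro D vdot C
  have hA : κ₃ / κ₆ < c := lt_of_le_of_lt (le_max_left _ _) hc
  have hB : κ₄ / κ₇ < c := lt_of_le_of_lt (le_max_right _ _) hc
  have hc0 : 0 < c := lt_trans (div_pos h₃ h₆) hA
  have h36 : κ₃ < c * κ₆ := by
    have := (div_lt_iff₀ h₆).mp hA; linarith
  have h47 : κ₄ < c * κ₇ := by
    have := (div_lt_iff₀ h₇).mp hB; linarith
  have hC3 : 0 < κ₆ / 2 - κ₃ / (2 * c) := by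
    rw [sub_pos, div_lt_div_iff₀ (by positivity) (by norm_num)]; nlinarith
  have hC4 : 0 < κ₇ - κ₄ / c := by
    rw [sub_pos, div_lt_iff₀ hc0]; nlinarith
  have hCpos : 0 < C :=
    lt_min (lt_min (by linarith) h₂) (lt_min hC3 hC4)
  -- bounds on C
  have e1 : 2 * C ≤ κ₁ := by
    have : C ≤ κ₁ / 2 := le_trans (min_le_left _ _) (min_le_left _ _); linarith
  have e2 : C ≤ κ₂ := le_trans (min_le_left _ _) (min_le_right _ _)
  have e3 : 2 * c * C ≤ c * κ₆ - κ₃ := by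
    have h : C ≤ κ₆ / 2 - κ₃ / (2 * c) := le_trans (min_le_right _ _) (min_le_left _ _)
    have heq : 2 * c * (κ₆ / 2 - κ₃ / (2 * c)) = c * κ₆ - κ₃ := by
      field_simp
    nlinarith [mul_le_mul_of_nonneg_left h (by linarith : (0:ℝ) ≤ 2 * c)]
  have e4 : c * C ≤ c * κ₇ - κ₄ := by
    have h : C ≤ κ₇ - κ₄ / c := le_trans (min_le_right _ _) (min_le_right _ _)
    have heq : c * (κ₇ - κ₄ / c) = c * κ₇ - κ₄ := by field_simp
    nlinarith [mul_le_mul_of_nonneg_left h (le_of_lt hc0)]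
  have key : ∀ x : Fin 4 → ℕ, D x ≤ 2 * c * κ₅ + κ₀ - C * vdot x := by
    intro x
    have hx0 : (0:ℝ) ≤ (x 0 : ℝ) := Nat.cast_nonneg _
    have hx1 : (0:ℝ) ≤ (x 1 : ℝ) := Nat.cast_nonneg _
    have hx2 : (0:ℝ) ≤ (x 2 : ℝ) := Nat.cast_nonneg _
    have hx3 : (0:ℝ) ≤ (x 3 : ℝ) := Nat.cast_nonneg _
    simp only [D, vdot]
    nlinarith [mul_le_mul_of_nonneg_right e1 hx0, mul_le_mul_of_nonneg_right e2 hx1,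
      mul_le_mul_of_nonneg_right e3 hx2, mul_le_mul_of_nonneg_right e4 hx3,
      mul_nonneg (mul_nonneg h₃₁ hx0) hx2, mul_nonneg (mul_nonneg h₄₁ hx0) hx3,
      mul_nonneg (mul_nonneg h₃₂ hx1) hx2, mul_nonneg (mul_nonneg h₄₂ hx1) hx3]
  refine ⟨hCpos, key, ?_⟩
  have hvdot : ∀ y : Fin 4 → ℕ, vdot y = 2 * (y 0 : ℝ) + (y 1 : ℝ) + 2 * c * (y 2 : ℝ) + c * (y 3 : ℝ) := fun _ => rfl
  clear_value C
  clear_value D vdot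
  set S : ℝ := 2 * c * κ₅ + κ₀ with hS
  have hSpos : 0 < S := by positivity
  set m : ℝ := min 1 c with hm
  have hm0 : 0 < m := lt_min one_pos hc0
  have hm1 : m ≤ 1 := min_le_left _ _
  have hmc : m ≤ c := min_le_right _ _
  set N : ℕ := ⌈2 * S / (C * m)⌉₊ with hN
  apply Set.Finite.subset (Set.Finite.pi (fun _ : Fin 4 => Set.finite_Iic N))
  intro x hx
  simp only [Set.mem_setOf_eq] at hx
  push_neg at hx
  have h1 : -(C / 2) * vdot x < S - C * vdot x := lt_of_lt_of_le hx (key x)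
  have hvd : C * vdot x < 2 * S := by nlinarith [h1]
  have hx0 : (0:ℝ) ≤ (x 0 : ℝ) := Nat.cast_nonneg _
  have hx1 : (0:ℝ) ≤ (x 1 : ℝ) := Nat.cast_nonneg _
  have hx2 : (0:ℝ) ≤ (x 2 : ℝ) := Nat.cast_nonneg _
  have hx3 : (0:ℝ) ≤ (x 3 : ℝ) := Nat.cast_nonneg _
  have key2 : ∀ j : Fin 4, m * (x j : ℝ) ≤ vdot x → x j ≤ N := by
    intro j hj
    have h1' : C * (m * (x j : ℝ)) < 2 * S := by
      have := mul_le_mul_of_nonneg_left hj (le_of_lt hCpos)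
      linarith
    have h2 : (x j : ℝ) < 2 * S / (C * m) := by
      rw [lt_div_iff₀ (by positivity)]
      nlinarith
    have h3 : (x j : ℝ) ≤ (N : ℝ) := le_trans (le_of_lt h2) (Nat.le_ceil _)
    exact_mod_cast h3
  have b0 : x 0 ≤ N := key2 0 (by
    rw [hvdot x]
    nlinarith [mul_le_mul_of_nonneg_right hm1 hx0, mul_nonneg (mul_nonneg (by norm_num : (0:ℝ) ≤ 2) (le_of_lt hc0)) hx2, mul_nonneg (le_of_lt hc0) hx3])
  have b1 : x 1 ≤ N := key2 1 (by
    rw [hvdot x]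
    nlinarith [mul_le_mul_of_nonneg_right hm1 hx1, mul_nonneg (mul_nonneg (by norm_num : (0:ℝ) ≤ 2) (le_of_lt hc0)) hx2, mul_nonneg (le_of_lt hc0) hx3])
  have b2 : x 2 ≤ N := key2 2 (by
    rw [hvdot x]
    nlinarith [mul_le_mul_of_nonneg_right hmc hx2, mul_nonneg (mul_nonneg (by norm_num : (0:ℝ) ≤ 2) (le_of_lt hc0)) hx2, mul_nonneg (le_of_lt hc0) hx3])
  have b3 : x 3 ≤ N := key2 3 (by
    rw [hvdot x]
    nlinarith [mul_le_mul_of_nonneg_right hmc hx3, mul_nonneg (mul_nonneg (by norm_num : (0:ℝ) ≤ 2) (le_of_lt hc0)) hx2, mul_nonneg (le_of_lt hc0) hx3])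
  intro i _
  fin_cases i
  · exact b0
  · exact b1
  · exact b2
  · exact b3
end

section
/- In a reaction network on d species, define reachability z₁ ⇀ z₂ for a generic SRS: there exist (possibly repeated) reactions y₁→y₁′,…,y_m→y_m′ in ℛ with z₂ = z₁ + Σᵢ(yᵢ′ − yᵢ) and z₁ + Σ_{i<j}(yᵢ′ − yᵢ) ≥ y_j componentwise for each j. Let ℛ be a first order reaction network and ℛ♠ its monomerization, i.e., ℛ♠ consists of all monomolecular reactions of ℛ together with the reactions {0 → S_k : k ∈ K}, where K is the union of supports of all states reachable from 0 in ℛ. Then for all x, z ∈ ℕ₀^d, x ⇀ z in ℛ implies x ⇀ z in ℛ♠. -/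
/-- One firing step of a generic SRS: a reaction `(y, y') ∈ R` can fire at state
`x` iff `y ≤ x` componentwise, moving the state to `x - y + y'`. -/
def Step {d : ℕ} (R : Set ((Fin d → ℕ) × (Fin d → ℕ))) (x x' : Fin d → ℕ) : Prop :=
  ∃ r ∈ R, (∀ i, r.1 i ≤ x i) ∧ ∀ i, x' i + r.1 i = x i + r.2 i

/-- Reachability `x ⇀ z` for a generic SRS: a finite firing sequence from `x` to `z`. -/
def Reaches {d : ℕ} (R : Set ((Fin d → ℕ) × (Fin d → ℕ))) :
    (Fin d → ℕ) → (Fin d → ℕ) → Prop :=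
  Relation.ReflTransGen (Step R)

/-- The monomerization `ℛ♠` of a first order network `ℛ`: all monomolecular
reactions of `ℛ` together with `0 → S_k` for every `k` in the union of supports
of states reachable from `0` for `ℛ`. -/
def monomerization {d : ℕ} (R : Set ((Fin d → ℕ) × (Fin d → ℕ))) :
    Set ((Fin d → ℕ) × (Fin d → ℕ)) :=
  {r ∈ R | ∑ i, r.1 i = 1} ∪
    {r | (∃ k, (∃ y', Reaches R 0 y' ∧ y' k ≠ 0) ∧
        r = (0, fun i => if i = k then 1 else 0))}

lemma reaches_add_of_units {d : ℕ} (M : Set ((Fin d → ℕ) × (Fin d → ℕ)))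
    (n : ℕ) : ∀ v : Fin d → ℕ, ∑ i, v i = n →
    (∀ k, v k ≠ 0 → ((0 : Fin d → ℕ), fun i => if i = k then 1 else 0) ∈ M) →
    ∀ x : Fin d → ℕ, Reaches M x (fun i => x i + v i) := by
  induction n with
  | zero =>
    intro v hv _ x
    have h0 : ∀ i, v i = 0 := by
      intro i
      exact (Finset.sum_eq_zero_iff.mp hv) i (Finset.mem_univ i)
    have : (fun i => x i + v i) = x := by
      funext i; simp [h0 i]
    rw [this]
    exact Relation.ReflTransGen.refl
  | succ n ih =>
    intro v hv hm x
    have hex : ∃ k, v k ≠ 0 := by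
      by_contra hc
      push_neg at hc
      simp [hc] at hv
    obtain ⟨k, hk⟩ := hex
    set v' : Fin d → ℕ := Function.update v k (v k - 1) with hv'
    have hsum' : ∑ i, v' i = n := by
      have h1 : ∑ i, v' i = (v k - 1) + ∑ i ∈ Finset.univ \ {k}, v i :=
        Finset.sum_update_of_mem (Finset.mem_univ k) v (v k - 1)
      have h2 : ∑ i ∈ Finset.univ.erase k, v i + v k = ∑ i, v i :=
        Finset.sum_erase_add _ _ (Finset.mem_univ k)
      rw [Finset.sdiff_singleton_eq_erase] at h1
      omega
    have hstep : Step M x (fun i => x i + if i = k then 1 else 0) := by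
      refine ⟨((0 : Fin d → ℕ), fun i => if i = k then 1 else 0), hm k hk, ?_, ?_⟩
      · intro i; simp [Pi.zero_apply]
      · intro i; simp [Pi.zero_apply]
    have htail : Reaches M (fun i => x i + if i = k then 1 else 0)
        (fun i => (x i + if i = k then 1 else 0) + v' i) := by
      refine ih v' hsum' ?_ _
      intro j hj
      by_cases hjk : j = k
      · subst hjk; exact hm j hk
      · refine hm j ?_
        simpa [hv', Function.update_of_ne hjk] using hj
    have heq : (fun i => (x i + if i = k then 1 else 0) + v' i) =
        (fun i => x i + v i) := by
      funext i
      by_cases hik : i = k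
      · subst hik
        simp [hv', Function.update_self]
        omega
      · simp [hv', Function.update_of_ne hik, hik]
    exact Relation.ReflTransGen.head hstep (heq ▸ htail)

/-- A first order reaction network structurally embeds into its monomerization:
`x ⇀ z` for `ℛ` implies `x ⇀ z` for `ℛ♠`. -/
theorem reaches_monomerization {d : ℕ} (R : Set ((Fin d → ℕ) × (Fin d → ℕ)))
    (hfirst : ∀ r ∈ R, ∑ i, r.1 i ≤ 1) (hne : ∀ r ∈ R, r.1 ≠ r.2)
    (x z : Fin d → ℕ) (h : Reaches R x z) : Reaches (monomerization R) x z := by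
  induction h with
  | refl => exact Relation.ReflTransGen.refl
  | tail _ hstep ih =>
    rename_i a b _
    refine ih.trans ?_
    obtain ⟨r, hr, hle, heq⟩ := hstep
    rcases Nat.lt_or_ge (∑ i, r.1 i) 1 with hlt | hge
    · -- sum = 0 : r.1 = 0, simulate with unit productions
      have h0 : ∀ i, r.1 i = 0 := by
        intro i
        exact (Finset.sum_eq_zero_iff.mp (Nat.lt_one_iff.mp hlt)) i (Finset.mem_univ i)
      have hb : b = fun i => a i + r.2 i := by
        funext i; have := heq i; have := h0 i; omega
      have hreach0 : Reaches R 0 r.2 := by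
        refine Relation.ReflTransGen.single ⟨r, hr, ?_, ?_⟩
        · intro i; simp [h0 i]
        · intro i; simp [h0 i]
      have hm : ∀ k, r.2 k ≠ 0 →
          ((0 : Fin d → ℕ), fun i => if i = k then 1 else 0) ∈ monomerization R := by
        intro k hk
        exact Or.inr ⟨k, ⟨r.2, hreach0, hk⟩, rfl⟩
      rw [hb]
      exact reaches_add_of_units (monomerization R) (∑ i, r.2 i) r.2 rfl hm a
    · -- sum = 1 : monomolecular, reaction is in the monomerization
      have hsum : ∑ i, r.1 i = 1 := le_antisymm (hfirst r hr) hge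
      exact Relation.ReflTransGen.single ⟨r, Or.inl ⟨hr, hsum⟩, hle, heq⟩
end

section
/- Let ℛ be a first order endotactic reaction network on d species with ℛ = ℛ⁰ (the whole network is in the weakly connected component of 0) and ℛ⁰ ≠ ∅. Assume the following two facts (Propositions from the companion paper): (a) K := supp{y′ : 0 ⇀ y′} is nonempty and K ∪ L = supp 𝒞⁰ = [d], where L = {ℓ ∈ J∖K : e_k ⇀ e_ℓ for all k ∈ K} and J = {j : e_j ⇀ 0}; (b) there is a path from every nonzero reactant to 0. Then for every j ∈ [d], the states 0 and e_j communicate for the generic SRS ℛ, i.e., 0 ⇀ e_j and e_j ⇀ 0. -/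
/-- The unit state `e_k`. -/
def unitState {d : ℕ} (k : Fin d) : Fin d → ℕ := fun i => if i = k then 1 else 0

lemma step_add_mono {d : ℕ} {R : Set ((Fin d → ℕ) × (Fin d → ℕ))} {x z w : Fin d → ℕ}
    (h : Step R x z) : Step R (x + w) (z + w) := by
  obtain ⟨r, hr, hle, heq⟩ := h
  exact ⟨r, hr, fun i => le_trans (hle i) (Nat.le_add_right _ _),
    fun i => by have := heq i; simp [Pi.add_apply]; omega⟩

lemma reaches_add_mono {d : ℕ} {R : Set ((Fin d → ℕ) × (Fin d → ℕ))} {x z : Fin d → ℕ}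
    (w : Fin d → ℕ) (h : Reaches R x z) : Reaches R (x + w) (z + w) := by
  induction h with
  | refl => exact Relation.ReflTransGen.refl
  | tail _ hstep ih => exact ih.tail (step_add_mono hstep)

lemma drain {d : ℕ} {R : Set ((Fin d → ℕ) × (Fin d → ℕ))}
    (h0 : ∀ ℓ, Reaches R (unitState ℓ) 0) (w : Fin d → ℕ) : Reaches R w 0 := by
  generalize hn : (∑ i, w i) = n
  induction n generalizing w with
  | zero =>
    have : w = 0 := by
      funext i
      have := Finset.sum_eq_zero_iff.mp hn i (Finset.mem_univ i)
      simpa using this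
    simp [this]
    exact Relation.ReflTransGen.refl
  | succ n ih =>
    have : ∃ ℓ, w ℓ ≠ 0 := by
      by_contra h
      push_neg at h
      simp [h] at hn
    obtain ⟨ℓ, hℓ⟩ := this
    set w' : Fin d → ℕ := fun i => w i - unitState ℓ i with hw'
    have hsplit : w = unitState ℓ + w' := by
      funext i
      simp only [Pi.add_apply, hw', unitState]
      by_cases h : i = ℓ <;> simp [h] <;> omega
    have h1 : Reaches R w w' := by
      have := reaches_add_mono (R := R) w' (h0 ℓ)
      rw [← hsplit] at this
      simpa using this
    have hsum : ∑ i, w' i = n := by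
      have key : ∀ i, w i = w' i + unitState ℓ i := by
        intro i
        simp only [hw', unitState]
        by_cases h : i = ℓ <;> simp [h] <;> omega
      have hsplit2 : ∑ i, w i = ∑ i, w' i + ∑ i, unitState ℓ i := by
        rw [← Finset.sum_add_distrib]
        exact Finset.sum_congr rfl (fun i _ => key i)
      have hu : ∑ i, unitState ℓ i = 1 := by simp [unitState]
      omega
    exact h1.trans (ih w' hsum)

/-- Let `ℛ` be a first order (endotactic) reaction network with `ℛ = ℛ⁰ ≠ ∅`.
Assume the structural facts from the companion paper:
(a) `K = supp{y' : 0 ⇀ y'}` is nonempty and `K ∪ L = J = supp 𝒞⁰ = [d]`, where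
`J = {j : e_j ⇀ 0}` and `L = {ℓ ∈ J∖K : e_k ⇀ e_ℓ for all k ∈ K}`;
(b) every nonzero reactant leads back to `0`.
Then `0` and `e_j` communicate for every `j ∈ [d]`. -/
theorem zero_communicates_with_units {d : ℕ}
    (R : Set ((Fin d → ℕ) × (Fin d → ℕ)))
    (hfirst : ∀ r ∈ R, ∑ i, r.1 i ≤ 1) (hne' : ∀ r ∈ R, r.1 ≠ r.2)
    (hRne : R.Nonempty) :
    let J : Set (Fin d) := {j | Reaches R (unitState j) 0}
    let K : Set (Fin d) := {k | ∃ y', Reaches R 0 y' ∧ y' k ≠ 0}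
    let L : Set (Fin d) := {l | l ∈ J \ K ∧ ∀ k ∈ K, Reaches R (unitState k) (unitState l)}
    K.Nonempty → K ∪ L = Set.univ → J = Set.univ →
    (∀ r ∈ R, r.1 ≠ 0 → Reaches R r.1 0) →
    ∀ j : Fin d, Reaches R 0 (unitState j) ∧ Reaches R (unitState j) 0 := by
  intro J K L hKne hKL hJ hreact j
  have hunit0 : ∀ ℓ, Reaches R (unitState ℓ) 0 := by
    intro ℓ
    have : ℓ ∈ J := by rw [hJ]; trivial
    exact this
  refine ⟨?_, hunit0 j⟩
  -- key: for any k ∈ K, 0 ⇀ e_k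
  have hK : ∀ k, k ∈ K → Reaches R 0 (unitState k) := by
    rintro k ⟨y', hy', hk⟩
    set w : Fin d → ℕ := fun i => y' i - unitState k i with hw
    have hsplit : y' = unitState k + w := by
      funext i
      simp only [Pi.add_apply, hw, unitState]
      by_cases h : i = k <;> simp [h] <;> omega
    have : Reaches R y' (unitState k) := by
      have := reaches_add_mono (R := R) (x := w) (z := 0) (unitState k)
        (drain hunit0 w)
      rw [add_comm] at this
      rw [← hsplit] at this
      simpa using this
    exact hy'.trans this
  have hjmem : j ∈ K ∪ L := by rw [hKL]; trivial
  rcases hjmem with hj | hj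
  · exact hK j hj
  · obtain ⟨k, hk⟩ := hKne
    exact (hK k hk).trans (hj.2 k hk)
end
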